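/- (Theorem 2.1(b), abstract form.) If the pixel q lies inside the anomaly, i.e. μ(q \ D) = 0 (so q ⊆ D up to a μ-null set), then |Φ · G⁻¹ Φ| ≤ ∫_q ‖v_j(x)‖² dμ(x). -/

import Mathlib

open MeasureTheory Matrix RealInnerProductSpace

/-!
Since `q ⊆ D` a.e., `G = A + B` with `A`, `B` the Gram matrices of the `v k` over `q` and
`D \ q`; both are positive semidefinite, and `Φ = A eⱼ`. For `y = G⁻¹ Φ` we get
`Φ ⬝ y = y ⬝ G y ≥ y ⬝ A y`, while `0 ≤ (eⱼ - y) ⬝ A (eⱼ - y) = Aⱼⱼ - 2 Φ ⬝ y + y ⬝ A y`;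
together `Φ ⬝ y ≤ Aⱼⱼ = ∫_q ‖vⱼ‖²`. The lower bound `0 ≤ Φ ⬝ y` holds because `G⁻¹` is positive
semidefinite.
-/

namespace Matrix

variable {n : Type*} [Fintype n] [DecidableEq n] {A B : Matrix n n ℝ}

theorem PosSemidef.dotProduct_inv_add_mulVec_le (hA : A.PosSemidef) (hB : B.PosSemidef)
    (hAB : IsUnit (A + B).det) (c : n → ℝ) :
    A *ᵥ c ⬝ᵥ (A + B)⁻¹ *ᵥ (A *ᵥ c) ≤ c ⬝ᵥ A *ᵥ c := by
  set y := (A + B)⁻¹ *ᵥ (A *ᵥ c)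
  have hy : (A + B) *ᵥ y = A *ᵥ c := by
    rw [mulVec_mulVec, mul_nonsing_inv _ hAB, one_mulVec]
  have hsymm (u w : n → ℝ) : u ⬝ᵥ A *ᵥ w = w ⬝ᵥ A *ᵥ u := by
    rw [dotProduct_mulVec, ← mulVec_transpose, ← conjTranspose_eq_transpose_of_trivial, hA.1.eq,
      dotProduct_comm]
  have hsplit : A *ᵥ c ⬝ᵥ y = y ⬝ᵥ A *ᵥ y + y ⬝ᵥ B *ᵥ y := by
    rw [← hy, dotProduct_comm, add_mulVec, dotProduct_add]
  have hexpand :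
      (c - y) ⬝ᵥ A *ᵥ (c - y) = c ⬝ᵥ A *ᵥ c - 2 * (A *ᵥ c ⬝ᵥ y) + y ⬝ᵥ A *ᵥ y := by
    simp only [mulVec_sub, sub_dotProduct, dotProduct_sub, hsymm c y, dotProduct_comm (A *ᵥ c) y]
    ring
  have hAcy : 0 ≤ (c - y) ⬝ᵥ A *ᵥ (c - y) := by simpa using hA.dotProduct_mulVec_nonneg (c - y)
  have hBy : 0 ≤ y ⬝ᵥ B *ᵥ y := by simpa using hB.dotProduct_mulVec_nonneg y
  linarith

end Matrix

section
variable {Ω E : Type*} [MeasurableSpace Ω] {μ : Measure Ω} [NormedAddCommGroup E] [NormedSpace ℝ E]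

theorem setIntegral_eq_add_sdiff_of_ae_subset {f : Ω → E} {s t : Set Ω} (ht : MeasurableSet t)
    (hts : t ≤ᵐ[μ] s) (hf : IntegrableOn f s μ) :
    ∫ x in s, f x ∂μ = ∫ x in t, f x ∂μ + ∫ x in s \ t, f x ∂μ := by
  have hst : (s ∩ t : Set Ω) =ᵐ[μ] t :=
    Filter.eventuallyLE_antisymm_iff.2 ⟨Filter.Eventually.of_forall fun _ hx => hx.2,
      by filter_upwards [hts] with x hx hxt using ⟨hx hxt, hxt⟩⟩
  rw [← integral_inter_add_sdiff ht hf, setIntegral_congr_set hst]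
end

section
variable {Ω E : Type*} [MeasurableSpace Ω] {μ : Measure Ω} [NormedAddCommGroup E]
  [InnerProductSpace ℝ E] {f g : Ω → E}

theorem MeasureTheory.MemLp.inner_toLp_ae_eq (hf : MemLp f 2 μ) (hg : MemLp g 2 μ) :
    (fun x => ⟪hf.toLp f x, hg.toLp g x⟫) =ᵐ[μ] fun x => ⟪f x, g x⟫ := by
  filter_upwards [hf.coeFn_toLp, hg.coeFn_toLp] with x hfx hgx
  rw [hfx, hgx]

theorem MeasureTheory.MemLp.integrable_inner (hf : MemLp f 2 μ) (hg : MemLp g 2 μ) :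
    Integrable (fun x => ⟪f x, g x⟫) μ :=
  (L2.integrable_inner (hf.toLp f) (hg.toLp g)).congr (hf.inner_toLp_ae_eq hg)

theorem posSemidef_of_integral_inner {ι : Type*} [Finite ι] {v : ι → Ω → E}
    (hv : ∀ k, MemLp (v k) 2 μ) : (Matrix.of fun a b => ∫ x, ⟪v a x, v b x⟫ ∂μ).PosSemidef := by
  have hgram : (Matrix.of fun a b => ∫ x, ⟪v a x, v b x⟫ ∂μ) =
      gram ℝ fun k => (hv k).toLp (v k) := by
    ext a b
    rw [gram_apply, L2.inner_def, of_apply]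
    exact (integral_congr_ae ((hv a).inner_toLp_ae_eq (hv b))).symm
  exact hgram ▸ posSemidef_gram ℝ _
end

theorem stmt3_general {Ω : Type*} [MeasurableSpace Ω] (μ : Measure Ω)
    {E : Type*} [NormedAddCommGroup E] [InnerProductSpace ℝ E]
    {m : ℕ} (v : Fin m → Ω → E)
    (hv : ∀ k, MemLp (v k) 2 μ)
    (D : Set Ω)
    (G : Matrix (Fin m) (Fin m) ℝ)
    (hGdef : ∀ j k, G j k = ∫ x in D, ⟪v j x, v k x⟫ ∂μ)
    (hGinv : IsUnit G.det)
    (q : Set Ω) (hq : MeasurableSet q)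
    (hqD : μ (q \ D) = 0)
    (j : Fin m) (Φ : Fin m → ℝ)
    (hΦ : ∀ k, Φ k = ∫ x in q, ⟪v j x, v k x⟫ ∂μ) :
    |Φ ⬝ᵥ G⁻¹.mulVec Φ| ≤ ∫ x in q, ‖v j x‖ ^ 2 ∂μ := by
  set A := Matrix.of fun a b => ∫ x in q, ⟪v a x, v b x⟫ ∂μ
  set B := Matrix.of fun a b => ∫ x in D \ q, ⟪v a x, v b x⟫ ∂μ
  have hA : A.PosSemidef := posSemidef_of_integral_inner fun k => (hv k).restrict q
  have hB : B.PosSemidef := posSemidef_of_integral_inner fun k => (hv k).restrict (D \ q)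
  have hG : G = A + B := by
    ext a b
    rw [hGdef, Matrix.add_apply]
    exact setIntegral_eq_add_sdiff_of_ae_subset hq (ae_le_set.2 hqD)
      (((hv a).restrict D).integrable_inner ((hv b).restrict D))
  have hΦA : Φ = A *ᵥ Pi.single j 1 := by
    ext k
    simp only [mulVec_single_one, col_apply, A, of_apply, hΦ, real_inner_comm]
  have hAjj : Pi.single j 1 ⬝ᵥ A *ᵥ Pi.single j 1 = ∫ x in q, ‖v j x‖ ^ 2 ∂μ := by
    rw [single_one_dotProduct, mulVec_single_one, col_apply]
    simp only [A, of_apply, real_inner_self_eq_norm_sq]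
  have hnonneg : 0 ≤ Φ ⬝ᵥ G⁻¹ *ᵥ Φ := by
    simpa using (hG ▸ hA.add hB).inv.dotProduct_mulVec_nonneg Φ
  rw [abs_of_nonneg hnonneg, ← hAjj, hΦA, hG]
  exact hA.dotProduct_inv_add_mulVec_le hB (hG ▸ hGinv) _

/-- Theorem 2.1(b), abstract form: if the pixel `q` lies inside the anomaly
(`μ (q \ D) = 0`), then `|Φ ⬝ G⁻¹ Φ| ≤ ∫_q ‖v_j‖² dμ`. -/
theorem stmt3 {Ω : Type*} [MeasurableSpace Ω] (μ : Measure Ω)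
    {E : Type*} [NormedAddCommGroup E] [InnerProductSpace ℝ E]
    {m : ℕ} (hm : 0 < m) (v : Fin m → Ω → E)
    (hv : ∀ k, MemLp (v k) 2 μ)
    (D : Set Ω) (hD : MeasurableSet D)
    (G : Matrix (Fin m) (Fin m) ℝ)
    (hGdef : ∀ j k, G j k = ∫ x in D, ⟪v j x, v k x⟫ ∂μ)
    (hGinv : IsUnit G.det)
    (q : Set Ω) (hq : MeasurableSet q)
    (hqD : μ (q \ D) = 0)
    (j : Fin m) (Φ : Fin m → ℝ)
    (hΦ : ∀ k, Φ k = ∫ x in q, ⟪v j x, v k x⟫ ∂μ) :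
    |Φ ⬝ᵥ G⁻¹.mulVec Φ| ≤ ∫ x in q, ‖v j x‖ ^ 2 ∂μ :=
  stmt3_general μ v hv D G hGdef hGinv q hq hqD j Φ hΦ
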